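/- arXiv:2601.00520 — 2 statements merged into one kernel-verified Lean document; each statement's English description precedes it below -/
import Mathlib

section
/- Let 𝒜₁, 𝒜₂, ℬ₁, ℬ₂ be self-adjoint extensions of A with tr(dom 𝒜ᵢ) = ran Pᵢ and tr(dom ℬᵢ) = ran Qᵢ for orthogonal projections Pᵢ, Qᵢ in 𝔥², and define 𝒩ᵢ on dom(𝒜ᵢ) × dom(ℬᵢ) by 𝒩ᵢ(u,v) = (−ℬᵢv, 𝒜ᵢu). Let ζ ∉ Spec(𝒩₁) ∪ Spec(𝒩₂) and write Rᵢ(ζ) := (𝒩ᵢ − ζ)⁻¹. Then the complex conjugate ζ̄ also lies outside Spec(𝒩₁) ∪ Spec(𝒩₂), and one has the symplectic resolvent difference formulas R₁(ζ) − R₂(ζ) = τ (T R₁(ζ̄))* 𝒥 T R₂(ζ) and R₁(ζ) − R₂(ζ) = τ (T R₁(ζ̄))* ((P₁ J P₂) ⊕ (−Q₁ J Q₂)) T R₂(ζ), as identities of bounded operators on H². -/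
noncomputable section

open Function Set

namespace CSO

local notation "⟪" x ", " y "⟫" => (inner ℂ x y : ℂ)

/-- The ℓ²-direct sum `E ⊕ E`. -/
abbrev Sq (E : Type*) : Type _ := WithLp 2 (E × E)

section Pieces

variable {E F E' F' : Type*}
  [NormedAddCommGroup E] [InnerProductSpace ℂ E]
  [NormedAddCommGroup F] [InnerProductSpace ℂ F]
  [NormedAddCommGroup E'] [InnerProductSpace ℂ E']
  [NormedAddCommGroup F'] [InnerProductSpace ℂ F']

/-- Pairing map into the ℓ²-direct sum. -/
def mk2 (x y : E) : Sq E := (WithLp.equiv 2 (E × E)).symm (x, y)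

/-- First component. -/
def c1 (u : Sq E) : E := (WithLp.equiv 2 (E × E) u).1

/-- Second component. -/
def c2 (u : Sq E) : E := (WithLp.equiv 2 (E × E) u).2

/-- Transport of a product of continuous linear maps to the ℓ²-products. -/
def pm (A : E →L[ℂ] E') (B : F →L[ℂ] F') :
    WithLp 2 (E × F) →L[ℂ] WithLp 2 (E' × F') :=
  (((WithLp.prodContinuousLinearEquiv 2 ℂ E' F').symm :
      (E' × F') →L[ℂ] WithLp 2 (E' × F')).comp (A.prodMap B)).comp
    ((WithLp.prodContinuousLinearEquiv 2 ℂ E F :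
      WithLp 2 (E × F) ≃L[ℂ] (E × F)) : WithLp 2 (E × F) →L[ℂ] E × F)

/-- The continuous linear map `x ↦ (A x, B x)` into an ℓ²-direct sum. -/
def mk2L (A B : E →L[ℂ] F) : E →L[ℂ] Sq F :=
  (((WithLp.prodContinuousLinearEquiv 2 ℂ F F).symm :
      (F × F) →L[ℂ] Sq F)).comp (A.prod B)

/-- First component as a continuous linear map. -/
def c1L : Sq E →L[ℂ] E :=
  (ContinuousLinearMap.fst ℂ E E).comp
    ((WithLp.prodContinuousLinearEquiv 2 ℂ E E :
      Sq E ≃L[ℂ] (E × E)) : Sq E →L[ℂ] E × E)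

/-- Second component as a continuous linear map. -/
def c2L : Sq E →L[ℂ] E :=
  (ContinuousLinearMap.snd ℂ E E).comp
    ((WithLp.prodContinuousLinearEquiv 2 ℂ E E :
      Sq E ≃L[ℂ] (E × E)) : Sq E →L[ℂ] E × E)

/-- The involution `τ (u₁, u₂) = (u₂, u₁)`. -/
def swapL (E : Type*) [NormedAddCommGroup E] [InnerProductSpace ℂ E] :
    Sq E →L[ℂ] Sq E := mk2L c2L c1L

/-- The standard symplectic matrix `J (f₁, f₂) = (f₂, -f₁)`. -/
def Jm (E : Type*) [NormedAddCommGroup E] [InnerProductSpace ℂ E] :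
    Sq E →L[ℂ] Sq E := mk2L c2L (-c1L)

/-- The symplectic matrix `𝒥 = J ⊕ (-J)` on `𝔥⁴`. -/
def calJ (E : Type*) [NormedAddCommGroup E] [InnerProductSpace ℂ E] :
    Sq (Sq E) →L[ℂ] Sq (Sq E) := pm (Jm E) (-(Jm E))

/-- The symplectic form `ω(f, g) = ⟨f₂, g₁⟩ - ⟨f₁, g₂⟩` on `𝔥²`. -/
def om (f g : Sq E) : ℂ := ⟪c2 f, c1 g⟫ - ⟪c1 f, c2 g⟫

/-- The symplectic form
`Ω(f, g) = ⟨f₂,g₁⟩ - ⟨f₁,g₂⟩ - ⟨f₄,g₃⟩ + ⟨f₃,g₄⟩` on `𝔥⁴`. -/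
def Om (f g : Sq (Sq E)) : ℂ := om (c1 f) (c1 g) - om (c2 f) (c2 g)

/-- Orthogonal projection predicate. -/
def IsOrthProj [CompleteSpace E] (P : E →L[ℂ] E) : Prop :=
  P.comp P = P ∧ IsSelfAdjoint P

/-- The range of `P` is a Lagrangian subspace of `(𝔥², ω)`. -/
def IsLagrangianRange (P : Sq E →L[ℂ] Sq E) : Prop :=
  ∀ f, f ∈ Set.range P ↔ ∀ g ∈ Set.range P, om f g = 0

end Pieces

/-- The core data: a closed densely defined symmetric operator `A` with equal finite
deficiency indices `dim 𝔥`, whose adjoint `A*` has domain the Hilbert space `Hp = H₊`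
(with the graph inner product), realized through the embedding `e : H₊ → H` and the
bounded operator `As = A* : H₊ → H`. -/
structure Core (H 𝔥 Hp : Type*) [NormedAddCommGroup H] [InnerProductSpace ℂ H]
    [NormedAddCommGroup 𝔥] [InnerProductSpace ℂ 𝔥]
    [NormedAddCommGroup Hp] [InnerProductSpace ℂ Hp] where
  e : Hp →L[ℂ] H
  As : Hp →L[ℂ] H
  e_inj : Function.Injective e
  graph_inner : ∀ u v : Hp, ⟪u, v⟫ = ⟪e u, e v⟫ + ⟪As u, As v⟫
  domA : Submodule ℂ Hp
  dense_dom : Dense (e '' (domA : Set Hp))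
  adjoint_iff : ∀ v w : H,
      (∃ p : Hp, e p = v ∧ As p = w) ↔ ∀ u ∈ domA, ⟪As u, v⟫ = ⟪e u, w⟫
  closed_graph : IsClosed {q : H × H | ∃ p ∈ domA, e p = q.1 ∧ As p = q.2}
  defect_m : Module.finrank ℂ
      (LinearMap.ker (As.toLinearMap - Complex.I • e.toLinearMap)) = Module.finrank ℂ 𝔥
  defect_p : Module.finrank ℂ
      (LinearMap.ker (As.toLinearMap + Complex.I • e.toLinearMap)) = Module.finrank ℂ 𝔥

variable {H 𝔥 Hp : Type*}
  [NormedAddCommGroup H] [InnerProductSpace ℂ H]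
  [NormedAddCommGroup 𝔥] [InnerProductSpace ℂ 𝔥]
  [NormedAddCommGroup Hp] [InnerProductSpace ℂ Hp]

/-- The embedding `H₊² → H²`. -/
def Core.emb2 (C : Core H 𝔥 Hp) : Sq Hp →L[ℂ] Sq H := pm C.e C.e

/-- The action `(u₁,u₂) ↦ (-A* u₂, A* u₁)` (the common formula for `N` and its
extensions `𝒩`). -/
def Core.Nmax (C : Core H 𝔥 Hp) : Sq Hp →L[ℂ] Sq H :=
  mk2L ((-C.As).comp c2L) (C.As.comp c1L)

/-- The action of `N* : (u₁,u₂) ↦ (A* u₂, -A* u₁)`. -/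
def Core.NstarOp (C : Core H 𝔥 Hp) : Sq Hp →L[ℂ] Sq H := -C.Nmax

/-- The action of `(τN)* : (u₁,u₂) ↦ (A* u₁, -A* u₂)`. -/
def Core.tauNstarOp (C : Core H 𝔥 Hp) : Sq Hp →L[ℂ] Sq H :=
  mk2L (C.As.comp c1L) ((-C.As).comp c2L)

/-- Trace operator (boundary triplet map) for `A*`: bounded, surjective, and
satisfying the abstract Green identity. -/
structure IsTrace (C : Core H 𝔥 Hp) (tr : Hp →L[ℂ] Sq 𝔥) : Prop where
  surj : Function.Surjective tr
  green : ∀ u v : Hp, ⟪C.As u, C.e v⟫ - ⟪C.e u, C.As v⟫ = om (tr u) (tr v)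

/-- The doubled trace operator `T = tr ⊕ tr : H₊² → 𝔥⁴`. -/
def Top (tr : Hp →L[ℂ] Sq 𝔥) : Sq Hp →L[ℂ] Sq (Sq 𝔥) := pm tr tr

/-- `dom ⊆ H₊` is the domain of a self-adjoint extension of `A` (the extension being
the restriction of `A*` to `dom`). -/
structure IsSAExt (C : Core H 𝔥 Hp) (dom : Submodule ℂ Hp) : Prop where
  le : C.domA ≤ dom
  sa : ∀ v w : H,
      (∃ p ∈ dom, C.e p = v ∧ C.As p = w) ↔ ∀ u ∈ dom, ⟪C.As u, v⟫ = ⟪C.e u, w⟫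

/-- The bounded potential `V(u,v) = (-G v, F u)` on `H²`. -/
def Vop [CompleteSpace H] (F G : H →L[ℂ] H) : Sq H →L[ℂ] Sq H :=
  mk2L ((-G).comp c2L) (F.comp c1L)

/-- The adjoint potential `V*(u,v) = (F v, -G u)` on `H²`. -/
def VopStar [CompleteSpace H] (F G : H →L[ℂ] H) : Sq H →L[ℂ] Sq H :=
  mk2L (F.comp c2L) ((-G).comp c1L)

/-- `p ∈ dom(𝒜) × dom(ℬ)` and `(𝒩 + V - ζ) p = x`. -/
def ResSol (C : Core H 𝔥 Hp) [CompleteSpace H] (dU dV : Submodule ℂ Hp)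
    (V : Sq H →L[ℂ] Sq H) (ζ : ℂ) (p : Sq Hp) (x : Sq H) : Prop :=
  c1 p ∈ dU ∧ c2 p ∈ dV ∧ C.Nmax p + V (C.emb2 p) - ζ • C.emb2 p = x

/-- `R = (𝒩 + V - ζ)⁻¹`, viewed as a bounded operator from `H²` to `H₊²`. -/
def IsResS (C : Core H 𝔥 Hp) [CompleteSpace H] (dU dV : Submodule ℂ Hp)
    (V : Sq H →L[ℂ] Sq H) (ζ : ℂ) (R : Sq H →L[ℂ] Sq Hp) : Prop :=
  (∀ x, ResSol C dU dV V ζ (R x) x) ∧ ∀ p x, ResSol C dU dV V ζ p x → R x = p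

/-- `R = (𝒩 + V - ζ)⁻¹ ∈ B(H²)`. -/
def IsResW (C : Core H 𝔥 Hp) [CompleteSpace H] (dU dV : Submodule ℂ Hp)
    (V : Sq H →L[ℂ] Sq H) (ζ : ℂ) (R : Sq H →L[ℂ] Sq H) : Prop :=
  (∀ x, ∃ p, ResSol C dU dV V ζ p x ∧ C.emb2 p = R x) ∧
    ∀ p x, ResSol C dU dV V ζ p x → R x = C.emb2 p

/-- The spectrum of `𝒩 + V` (complement of the resolvent set). -/
def specSet (C : Core H 𝔥 Hp) [CompleteSpace H] (dU dV : Submodule ℂ Hp)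
    (V : Sq H →L[ℂ] Sq H) : Set ℂ :=
  {ζ | ¬ ∃ R : Sq H →L[ℂ] Sq Hp, IsResS C dU dV V ζ R}

/-- The resolvent `(𝒩 + V - ζ)⁻¹ : H² → H₊²` (defined by choice; `0` off the
resolvent set). -/
def resolventS (C : Core H 𝔥 Hp) [CompleteSpace H] (dU dV : Submodule ℂ Hp)
    (V : Sq H →L[ℂ] Sq H) (ζ : ℂ) : Sq H →L[ℂ] Sq Hp :=
  open Classical in
  if h : ∃ R, IsResS C dU dV V ζ R then h.choose else 0

/-- The resolvent `(𝒩 + V - ζ)⁻¹ ∈ B(H²)`. -/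
def resolventW (C : Core H 𝔥 Hp) [CompleteSpace H] (dU dV : Submodule ℂ Hp)
    (V : Sq H →L[ℂ] Sq H) (ζ : ℂ) : Sq H →L[ℂ] Sq H :=
  C.emb2.comp (resolventS C dU dV V ζ)

/-- `ζ` is an eigenvalue of `𝒩 + V`. -/
def IsEig (C : Core H 𝔥 Hp) [CompleteSpace H] (dU dV : Submodule ℂ Hp)
    (V : Sq H →L[ℂ] Sq H) (ζ : ℂ) : Prop :=
  ∃ p : Sq Hp, p ≠ 0 ∧ c1 p ∈ dU ∧ c2 p ∈ dV ∧
    C.Nmax p + V (C.emb2 p) = ζ • C.emb2 p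

/-- The one-parameter families of Hypothesis 3.1: trace operators, orthogonal
projections with Lagrangian ranges, self-adjoint extensions compatible with the
projections, and bounded self-adjoint perturbations. -/
structure IsFamily [CompleteSpace H] [CompleteSpace Hp] [FiniteDimensional ℂ 𝔥]
    (C : Core H 𝔥 Hp)
    (tr : ℝ → Hp →L[ℂ] Sq 𝔥) (P Q : ℝ → Sq 𝔥 →L[ℂ] Sq 𝔥)
    (dU dV : ℝ → Submodule ℂ Hp) (F G : ℝ → H →L[ℂ] H) : Prop where
  htr : ∀ t ∈ Icc (0:ℝ) 1, IsTrace C (tr t)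
  hP : ∀ t ∈ Icc (0:ℝ) 1, IsOrthProj (P t) ∧ IsLagrangianRange (P t)
  hQ : ∀ t ∈ Icc (0:ℝ) 1, IsOrthProj (Q t) ∧ IsLagrangianRange (Q t)
  hU : ∀ t ∈ Icc (0:ℝ) 1, IsSAExt C (dU t)
  hV : ∀ t ∈ Icc (0:ℝ) 1, IsSAExt C (dV t)
  htrU : ∀ t ∈ Icc (0:ℝ) 1, tr t '' ((dU t : Set Hp)) = Set.range (P t)
  htrV : ∀ t ∈ Icc (0:ℝ) 1, tr t '' ((dV t : Set Hp)) = Set.range (Q t)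
  hF : ∀ t ∈ Icc (0:ℝ) 1, IsSelfAdjoint (F t)
  hG : ∀ t ∈ Icc (0:ℝ) 1, IsSelfAdjoint (G t)

/-- Hypothesis 3.3: there is a point `z` in the resolvent set of `𝒩_t + V_t`
for all `t` near `t₀`. -/
def HypZ [CompleteSpace H] (C : Core H 𝔥 Hp) (dU dV : ℝ → Submodule ℂ Hp)
    (F G : ℝ → H →L[ℂ] H) (t₀ : ℝ) (z : ℂ) : Prop :=
  ∃ δ > 0, ∀ t : ℝ, |t - t₀| < δ →
    ∃ R, IsResS C (dU t) (dV t) (Vop (F t) (G t)) z R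

end CSO

/-!
Self-adjointness of `𝒜` and `ℬ` gives `R(ζ̄) = τ R(ζ)* τ` on `H²`: the components of
`R(ζ)* z` lie in `dom 𝒜` and `dom ℬ` by the characterisation of a self-adjoint domain,
`ker (𝒩 - ζ̄)` is orthogonal to `τ ran (𝒩 - ζ) = H²`, and the resolvent equations bound the graph
norm of a solution by its norm in `H²` and the data.

For the difference formula, take `q = R₁(ζ̄) τ y` and apply Green's identity in each component:
`⟨Rᵢ(ζ) x, y⟩` is a term depending only on `x` and `q`, minus `Ω(T Rᵢ(ζ) x, T q)`. The `Ω`-term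
vanishes for `i = 1` because `q ∈ dom 𝒩₁` and `𝒜₁`, `ℬ₁` are self-adjoint, and
`Ω(f, g) = ⟨𝒥 f, g⟩`. On traces of `dom 𝒩₂` and `dom 𝒩₁` the projections in
`(P₁ J P₂) ⊕ (-Q₁ J Q₂)` act as the identity, which gives the second formula.
-/

namespace CSO

local notation "⟪" x ", " y "⟫" => (inner ℂ x y : ℂ)

open scoped InnerProduct ComplexConjugate

section Coordinates

variable {E : Type*}

@[simp] lemma c1_mk2 (x y : E) : c1 (mk2 x y) = x := rfl
@[simp] lemma c2_mk2 (x y : E) : c2 (mk2 x y) = y := rfl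

lemma sq_ext {u v : Sq E} (h1 : c1 u = c1 v) (h2 : c2 u = c2 v) : u = v :=
  (WithLp.equiv 2 (E × E)).injective (Prod.ext h1 h2)

variable [AddCommGroup E]

@[simp] lemma c1_add (u v : Sq E) : c1 (u + v) = c1 u + c1 v := rfl
@[simp] lemma c2_add (u v : Sq E) : c2 (u + v) = c2 u + c2 v := rfl
@[simp] lemma c1_sub (u v : Sq E) : c1 (u - v) = c1 u - c1 v := rfl
@[simp] lemma c2_sub (u v : Sq E) : c2 (u - v) = c2 u - c2 v := rfl
@[simp] lemma c1_neg (u : Sq E) : c1 (-u) = -c1 u := rfl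
@[simp] lemma c2_neg (u : Sq E) : c2 (-u) = -c2 u := rfl
@[simp] lemma c1_zero : c1 (0 : Sq E) = 0 := rfl
@[simp] lemma c2_zero : c2 (0 : Sq E) = 0 := rfl

variable [Module ℂ E]

@[simp] lemma c1_smul (a : ℂ) (u : Sq E) : c1 (a • u) = a • c1 u := rfl
@[simp] lemma c2_smul (a : ℂ) (u : Sq E) : c2 (a • u) = a • c2 u := rfl

end Coordinates

section Norms

variable {E : Type*} [NormedAddCommGroup E]

lemma norm_c1_le (u : Sq E) : ‖c1 u‖ ≤ ‖u‖ := WithLp.norm_fst_le E u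

lemma norm_c2_le (u : Sq E) : ‖c2 u‖ ≤ ‖u‖ := WithLp.norm_snd_le E u

lemma norm_le_norm_c1_add_norm_c2 (u : Sq E) : ‖u‖ ≤ ‖c1 u‖ + ‖c2 u‖ := by
  have h : ‖u‖ ^ 2 = ‖c1 u‖ ^ 2 + ‖c2 u‖ ^ 2 := WithLp.prod_norm_sq_eq_of_L2 u
  nlinarith [norm_nonneg u, norm_nonneg (c1 u), norm_nonneg (c2 u)]

end Norms

section Sq

variable {E E' : Type*}
  [NormedAddCommGroup E] [InnerProductSpace ℂ E]
  [NormedAddCommGroup E'] [InnerProductSpace ℂ E']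

@[simp] lemma c1_pm (A B : E →L[ℂ] E') (u : Sq E) : c1 (pm A B u) = A (c1 u) := rfl
@[simp] lemma c2_pm (A B : E →L[ℂ] E') (u : Sq E) : c2 (pm A B u) = B (c2 u) := rfl
@[simp] lemma c1_swapL (u : Sq E) : c1 (swapL E u) = c2 u := rfl
@[simp] lemma c2_swapL (u : Sq E) : c2 (swapL E u) = c1 u := rfl
@[simp] lemma c1_Jm (u : Sq E) : c1 (Jm E u) = c2 u := rfl
@[simp] lemma c2_Jm (u : Sq E) : c2 (Jm E u) = -c1 u := rfl

lemma inner_sq_eq (u v : Sq E) : ⟪u, v⟫ = ⟪c1 u, c1 v⟫ + ⟪c2 u, c2 v⟫ := rfl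

lemma inner_swapL_left (u v : Sq E) : ⟪swapL E u, v⟫ = ⟪u, swapL E v⟫ := by
  simp only [inner_sq_eq, c1_swapL, c2_swapL]; ring

lemma inner_Jm_left (u v : Sq E) : ⟪Jm E u, v⟫ = om u v := by
  simp only [inner_sq_eq, c1_Jm, c2_Jm, inner_neg_left, om]; ring

lemma inner_calJ_left (f g : Sq (Sq E)) : ⟪calJ E f, g⟫ = Om f g := by
  rw [inner_sq_eq]
  simp only [calJ, c1_pm, c2_pm, neg_apply, inner_neg_left, inner_Jm_left, Om]
  ring

lemma inner_swapL_adjoint_comp_apply {F G : Type*}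
    [NormedAddCommGroup F] [InnerProductSpace ℂ F] [NormedAddCommGroup G]
    [InnerProductSpace ℂ G] [CompleteSpace E] [CompleteSpace F]
    (S : Sq E →L[ℂ] F) (K : G →L[ℂ] F) (x : G) (y : Sq E) :
    ⟪((swapL E).comp (S†)).comp K x, y⟫ = ⟪K x, S (swapL E y)⟫ := by
  rw [ContinuousLinearMap.comp_apply, ContinuousLinearMap.comp_apply, inner_swapL_left,
    ContinuousLinearMap.adjoint_inner_left]

lemma IsOrthProj.apply_of_mem_range [CompleteSpace E] {P : E →L[ℂ] E} (hP : IsOrthProj P)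
    {f : E} (hf : f ∈ Set.range P) : P f = f := by
  obtain ⟨g, rfl⟩ := hf
  exact congrArg (· g) hP.1

lemma IsOrthProj.inner_apply_left_of_mem_range [CompleteSpace E] {P : E →L[ℂ] E}
    (hP : IsOrthProj P) (f : E) {g : E} (hg : g ∈ Set.range P) : ⟪P f, g⟫ = ⟪f, g⟫ :=
  calc ⟪P f, g⟫ = ⟪f, P g⟫ := hP.2.isSymmetric f g
    _ = ⟪f, g⟫ := by rw [hP.apply_of_mem_range hg]

lemma inner_pm_proj_Jm_left [CompleteSpace E] {P₁ Q₁ P₂ Q₂ : Sq E →L[ℂ] Sq E}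
    (hP₁ : IsOrthProj P₁) (hQ₁ : IsOrthProj Q₁) (hP₂ : IsOrthProj P₂) (hQ₂ : IsOrthProj Q₂)
    {f g : Sq (Sq E)} (hf₁ : c1 f ∈ Set.range P₂) (hf₂ : c2 f ∈ Set.range Q₂)
    (hg₁ : c1 g ∈ Set.range P₁) (hg₂ : c2 g ∈ Set.range Q₁) :
    ⟪pm (P₁.comp ((Jm E).comp P₂)) (-(Q₁.comp ((Jm E).comp Q₂))) f, g⟫ = Om f g := by
  rw [← inner_calJ_left, inner_sq_eq, inner_sq_eq (calJ E f)]
  simp only [calJ, c1_pm, c2_pm, neg_apply, ContinuousLinearMap.comp_apply,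
    inner_neg_left, hP₂.apply_of_mem_range hf₁, hQ₂.apply_of_mem_range hf₂,
    hP₁.inner_apply_left_of_mem_range _ hg₁, hQ₁.inner_apply_left_of_mem_range _ hg₂]

end Sq

section Operators

variable {H 𝔥 Hp : Type*}
  [NormedAddCommGroup H] [InnerProductSpace ℂ H]
  [NormedAddCommGroup 𝔥] [InnerProductSpace ℂ 𝔥]
  [NormedAddCommGroup Hp] [InnerProductSpace ℂ Hp]

lemma Core.norm_le_norm_e_add_norm_As (C : Core H 𝔥 Hp) (p : Hp) :
    ‖p‖ ≤ ‖C.e p‖ + ‖C.As p‖ := by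
  have h : ‖p‖ ^ 2 = ‖C.e p‖ ^ 2 + ‖C.As p‖ ^ 2 := by
    have := C.graph_inner p p
    simp only [inner_self_eq_norm_sq_to_K] at this
    exact_mod_cast this
  nlinarith [norm_nonneg p, norm_nonneg (C.e p), norm_nonneg (C.As p)]

section Boundary

variable {C : Core H 𝔥 Hp}

@[simp] lemma c1_emb2 (p : Sq Hp) : c1 (C.emb2 p) = C.e (c1 p) := rfl
@[simp] lemma c2_emb2 (p : Sq Hp) : c2 (C.emb2 p) = C.e (c2 p) := rfl
@[simp] lemma c1_Nmax (p : Sq Hp) : c1 (C.Nmax p) = -C.As (c2 p) := rfl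
@[simp] lemma c2_Nmax (p : Sq Hp) : c2 (C.Nmax p) = C.As (c1 p) := rfl
@[simp] lemma c1_Top (tr : Hp →L[ℂ] Sq 𝔥) (p : Sq Hp) : c1 (Top tr p) = tr (c1 p) := rfl
@[simp] lemma c2_Top (tr : Hp →L[ℂ] Sq 𝔥) (p : Sq Hp) : c2 (Top tr p) = tr (c2 p) := rfl

lemma IsSAExt.inner_As_e {dom : Submodule ℂ Hp} (h : IsSAExt C dom) {u v : Hp}
    (hu : u ∈ dom) (hv : v ∈ dom) : ⟪C.As u, C.e v⟫ = ⟪C.e u, C.As v⟫ :=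
  (h.sa (C.e v) (C.As v)).mp ⟨v, hv, rfl, rfl⟩ u hu

lemma IsTrace.om_eq_zero {tr : Hp →L[ℂ] Sq 𝔥} (htr : IsTrace C tr) {dom : Submodule ℂ Hp}
    (h : IsSAExt C dom) {u v : Hp} (hu : u ∈ dom) (hv : v ∈ dom) : om (tr u) (tr v) = 0 := by
  rw [← htr.green, h.inner_As_e hu hv, sub_self]

lemma IsTrace.Om_eq_zero {tr : Hp →L[ℂ] Sq 𝔥} (htr : IsTrace C tr) {dU dV : Submodule ℂ Hp}
    (hU : IsSAExt C dU) (hV : IsSAExt C dV) {p q : Sq Hp} (hp₁ : c1 p ∈ dU) (hp₂ : c2 p ∈ dV)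
    (hq₁ : c1 q ∈ dU) (hq₂ : c2 q ∈ dV) : Om (Top tr p) (Top tr q) = 0 := by
  rw [Om, c1_Top, c1_Top, c2_Top, c2_Top, htr.om_eq_zero hU hp₁ hq₁, htr.om_eq_zero hV hp₂ hq₂,
    sub_self]

end Boundary

section Resolvent

variable [CompleteSpace H] {C : Core H 𝔥 Hp} {dU dV : Submodule ℂ Hp} {ζ : ℂ}

lemma resSol_zero_iff {p : Sq Hp} {x : Sq H} :
    ResSol C dU dV 0 ζ p x ↔ c1 p ∈ dU ∧ c2 p ∈ dV ∧
      C.As (c1 p) = c2 x + ζ • C.e (c2 p) ∧ C.As (c2 p) = -c1 x - ζ • C.e (c1 p) := by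
  refine and_congr_right' (and_congr_right' ⟨fun h => ⟨?_, ?_⟩, fun ⟨h₁, h₂⟩ => ?_⟩)
  · rw [← h]; simp
  · rw [← h]; simp
  · apply sq_ext <;> simp only [c1_sub, c2_sub, c1_Nmax, c2_Nmax, zero_apply,
      add_zero, c1_smul, c2_smul, c1_emb2, c2_emb2, h₁, h₂] <;> module

lemma ResSol.add {p q : Sq Hp} {x y : Sq H} (hp : ResSol C dU dV 0 ζ p x)
    (hq : ResSol C dU dV 0 ζ q y) : ResSol C dU dV 0 ζ (p + q) (x + y) := by
  rw [resSol_zero_iff] at *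
  obtain ⟨hp₁, hp₂, hp₃, hp₄⟩ := hp
  obtain ⟨hq₁, hq₂, hq₃, hq₄⟩ := hq
  refine ⟨add_mem hp₁ hq₁, add_mem hp₂ hq₂, ?_, ?_⟩ <;>
    simp only [c1_add, c2_add, map_add, hp₃, hp₄, hq₃, hq₄] <;> module

lemma ResSol.smul {p : Sq Hp} {x : Sq H} (a : ℂ) (hp : ResSol C dU dV 0 ζ p x) :
    ResSol C dU dV 0 ζ (a • p) (a • x) := by
  rw [resSol_zero_iff] at *
  obtain ⟨hp₁, hp₂, hp₃, hp₄⟩ := hp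
  refine ⟨dU.smul_mem a hp₁, dV.smul_mem a hp₂, ?_, ?_⟩ <;>
    simp only [c1_smul, c2_smul, map_smul, hp₃, hp₄] <;> module

lemma ResSol.sub {p q : Sq Hp} {x y : Sq H} (hp : ResSol C dU dV 0 ζ p x)
    (hq : ResSol C dU dV 0 ζ q y) : ResSol C dU dV 0 ζ (p - q) (x - y) := by
  simpa only [neg_one_smul, ← sub_eq_add_neg] using hp.add (hq.smul (-1))

lemma ResSol.norm_le {p : Sq Hp} {x : Sq H} (h : ResSol C dU dV 0 ζ p x) :
    ‖p‖ ≤ 2 * (1 + ‖ζ‖) * ‖C.emb2 p‖ + 2 * ‖x‖ := by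
  obtain ⟨-, -, h₁, h₂⟩ := resSol_zero_iff.mp h
  have hA₁ : ‖C.As (c1 p)‖ ≤ ‖x‖ + ‖ζ‖ * ‖C.emb2 p‖ := by
    rw [h₁]
    refine (norm_add_le _ _).trans (add_le_add (norm_c2_le x) ?_)
    rw [norm_smul, ← c2_emb2]
    exact mul_le_mul_of_nonneg_left (norm_c2_le _) (norm_nonneg ζ)
  have hA₂ : ‖C.As (c2 p)‖ ≤ ‖x‖ + ‖ζ‖ * ‖C.emb2 p‖ := by
    rw [h₂]
    refine (norm_sub_le _ _).trans (add_le_add ((norm_neg _).trans_le (norm_c1_le x)) ?_)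
    rw [norm_smul, ← c1_emb2]
    exact mul_le_mul_of_nonneg_left (norm_c1_le _) (norm_nonneg ζ)
  have he₁ : ‖C.e (c1 p)‖ ≤ ‖C.emb2 p‖ := norm_c1_le (C.emb2 p)
  have he₂ : ‖C.e (c2 p)‖ ≤ ‖C.emb2 p‖ := norm_c2_le (C.emb2 p)
  have := norm_le_norm_c1_add_norm_c2 p
  have := C.norm_le_norm_e_add_norm_As (c1 p)
  have := C.norm_le_norm_e_add_norm_As (c2 p)
  linarith

/-- The graph norm bound `ResSol.norm_le` upgrades a right inverse of `𝒩 - ζ` that is bounded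
into `H²` to one bounded into `H₊²`. -/
lemma exists_isResS_of_resSol (huniq : ∀ p, ResSol C dU dV 0 ζ p 0 → p = 0)
    (M : Sq H →L[ℂ] Sq H) (hex : ∀ y, ∃ p, ResSol C dU dV 0 ζ p y ∧ C.emb2 p = M y) :
    ∃ R, IsResS C dU dV 0 ζ R := by
  choose F hF hFM using hex
  have hF_eq : ∀ {p y}, ResSol C dU dV 0 ζ p y → F y = p := fun {_ y} hp =>
    sub_eq_zero.mp (huniq _ (by simpa using (hF y).sub hp))
  let L : Sq H →ₗ[ℂ] Sq Hp :=
    { toFun := F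
      map_add' := fun y z => hF_eq ((hF y).add (hF z))
      map_smul' := fun a y => hF_eq ((hF y).smul a) }
  have hbound : ∀ y, ‖L y‖ ≤ (2 * (1 + ‖ζ‖) * ‖M‖ + 2) * ‖y‖ := fun y => by
    have hM : ‖C.emb2 (F y)‖ ≤ ‖M‖ * ‖y‖ := (hFM y).symm ▸ M.le_opNorm y
    have := (hF y).norm_le
    change ‖F y‖ ≤ _
    nlinarith [norm_nonneg ζ]
  exact ⟨L.mkContinuous _ hbound, hF, fun p y hp => hF_eq hp⟩

section Adjoint

variable {R : Sq H →L[ℂ] Sq Hp}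

lemma IsResS.emb2_apply_resSol (hR : IsResS C dU dV 0 ζ R) {p : Sq Hp} {x : Sq H}
    (hp : ResSol C dU dV 0 ζ p x) : C.emb2.comp R x = C.emb2 p := by
  rw [ContinuousLinearMap.comp_apply, hR.2 p x hp]

/-- Test against `(u, 0)`, which `R(ζ)` recovers from `(-ζ u, A* u)`. -/
lemma IsResS.exists_mem_dU_adjoint (hR : IsResS C dU dV 0 ζ R) (hU : IsSAExt C dU)
    (z : Sq H) : ∃ p ∈ dU, C.e p = c2 (((C.emb2.comp R)†) z) ∧
      C.As p = c1 z + conj ζ • c1 (((C.emb2.comp R)†) z) := by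
  refine (hU.sa _ _).mpr fun u hu => ?_
  set W := C.emb2.comp R
  have hsol : W (mk2 (-(ζ • C.e u)) (C.As u)) = mk2 (C.e u) 0 :=
    (hR.emb2_apply_resSol (p := mk2 u 0)
      (resSol_zero_iff.mpr ⟨hu, dV.zero_mem, by simp, by simp⟩)).trans
      (sq_ext rfl (map_zero C.e))
  have hdec : mk2 (0 : H) (C.As u) = mk2 (-(ζ • C.e u)) (C.As u) + ζ • mk2 (C.e u) 0 := by
    apply sq_ext <;> simp
  calc ⟪C.As u, c2 ((W†) z)⟫
      = ⟪mk2 0 (C.As u), (W†) z⟫ := by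
        simp only [inner_sq_eq, c1_mk2, c2_mk2, inner_zero_left, zero_add]
    _ = ⟪W (mk2 0 (C.As u)), z⟫ := W.adjoint_inner_right _ _
    _ = ⟪mk2 (C.e u) 0, z⟫ + conj ζ * ⟪W (mk2 (C.e u) 0), z⟫ := by
        rw [hdec, map_add, map_smul, hsol, inner_add_left, inner_smul_left]
    _ = ⟪C.e u, c1 z + conj ζ • c1 ((W†) z)⟫ := by
        rw [← W.adjoint_inner_right]
        simp only [inner_sq_eq, c1_mk2, c2_mk2, inner_zero_left, add_zero, inner_add_right,
          inner_smul_right]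

lemma IsResS.exists_mem_dV_adjoint (hR : IsResS C dU dV 0 ζ R) (hV : IsSAExt C dV)
    (z : Sq H) : ∃ p ∈ dV, C.e p = c1 (((C.emb2.comp R)†) z) ∧
      C.As p = -c2 z - conj ζ • c2 (((C.emb2.comp R)†) z) := by
  refine (hV.sa _ _).mpr fun u hu => ?_
  set W := C.emb2.comp R
  have hsol : W (mk2 (-C.As u) (-(ζ • C.e u))) = mk2 0 (C.e u) :=
    (hR.emb2_apply_resSol (p := mk2 0 u)
      (resSol_zero_iff.mpr ⟨dU.zero_mem, hu, by simp, by simp⟩)).trans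
      (sq_ext (map_zero C.e) rfl)
  have hdec : mk2 (C.As u) (0 : H) = -mk2 (-C.As u) (-(ζ • C.e u)) - ζ • mk2 0 (C.e u) := by
    apply sq_ext <;> simp
  calc ⟪C.As u, c1 ((W†) z)⟫
      = ⟪mk2 (C.As u) 0, (W†) z⟫ := by
        simp only [inner_sq_eq, c1_mk2, c2_mk2, inner_zero_left, add_zero]
    _ = ⟪W (mk2 (C.As u) 0), z⟫ := W.adjoint_inner_right _ _
    _ = -⟪mk2 0 (C.e u), z⟫ - conj ζ * ⟪W (mk2 0 (C.e u)), z⟫ := by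
        rw [hdec, map_sub, map_neg, map_smul, hsol, inner_sub_left, inner_neg_left,
          inner_smul_left]
    _ = ⟪C.e u, -c2 z - conj ζ • c2 ((W†) z)⟫ := by
        rw [← W.adjoint_inner_right]
        simp only [inner_sq_eq, c1_mk2, c2_mk2, inner_zero_left, zero_add, inner_sub_right,
          inner_neg_right, inner_smul_right]

/-- A solution `d` of `(𝒩 - ζ̄) d = 0` is orthogonal to `τ (ran (𝒩 - ζ))`, which is
all of `H²`. -/
lemma IsResS.eq_zero_of_resSol_conj (hR : IsResS C dU dV 0 ζ R) (hU : IsSAExt C dU)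
    (hV : IsSAExt C dV) {d : Sq Hp} (hd : ResSol C dU dV 0 (conj ζ) d 0) : d = 0 := by
  obtain ⟨hd₁, hd₂, hAd₁, hAd₂⟩ := resSol_zero_iff.mp hd
  have horth : ∀ x : Sq H, ⟪x, mk2 (C.e (c2 d)) (C.e (c1 d))⟫ = 0 := fun x => by
    obtain ⟨hx₁, hx₂, hAx₁, hAx₂⟩ := resSol_zero_iff.mp (hR.1 x)
    have hs₁ := hU.inner_As_e hx₁ hd₁
    have hs₂ := hV.inner_As_e hx₂ hd₂
    rw [hAx₁, hAd₁] at hs₁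
    rw [hAx₂, hAd₂] at hs₂
    simp only [c1_zero, c2_zero, neg_zero, zero_add, zero_sub, inner_add_left, inner_sub_left,
      inner_neg_left, inner_smul_left, inner_neg_right, inner_smul_right] at hs₁ hs₂
    rw [inner_sq_eq, c1_mk2, c2_mk2]
    linear_combination hs₁ - hs₂
  have h0 := inner_self_eq_zero.mp (horth (mk2 (C.e (c2 d)) (C.e (c1 d))))
  apply sq_ext
  · exact C.e_inj (by simpa using congrArg c2 h0)
  · exact C.e_inj (by simpa using congrArg c1 h0)

lemma IsResS.exists_isResS_conj (hR : IsResS C dU dV 0 ζ R) (hU : IsSAExt C dU)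
    (hV : IsSAExt C dV) : ∃ R', IsResS C dU dV 0 (conj ζ) R' := by
  refine exists_isResS_of_resSol (fun d hd => hR.eq_zero_of_resSol_conj hU hV hd)
    ((swapL H).comp (((C.emb2.comp R)†).comp (swapL H))) fun y => ?_
  obtain ⟨p₁, hp₁, he₁, hA₁⟩ := hR.exists_mem_dU_adjoint hU (swapL H y)
  obtain ⟨p₂, hp₂, he₂, hA₂⟩ := hR.exists_mem_dV_adjoint hV (swapL H y)
  refine ⟨mk2 p₁ p₂, resSol_zero_iff.mpr ⟨hp₁, hp₂, ?_, ?_⟩, sq_ext ?_ ?_⟩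
  · simp [hA₁, he₂]
  · simp [hA₂, he₁]
  · simpa using he₁
  · simpa using he₂

end Adjoint

/-- Green's identity for both components, with `A*` eliminated through the two resolvent
equations. -/
lemma IsTrace.inner_emb2_eq {tr : Hp →L[ℂ] Sq 𝔥} (htr : IsTrace C tr)
    {dU' dV' : Submodule ℂ Hp} {p q : Sq Hp} {x y : Sq H} (hp : ResSol C dU dV 0 ζ p x)
    (hq : ResSol C dU' dV' 0 (conj ζ) q (swapL H y)) :
    ⟪C.emb2 p, y⟫ = ⟪c1 x, C.e (c2 q)⟫ + ⟪c2 x, C.e (c1 q)⟫ - Om (Top tr p) (Top tr q) := by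
  obtain ⟨-, -, hp₁, hp₂⟩ := resSol_zero_iff.mp hp
  obtain ⟨-, -, hq₁, hq₂⟩ := resSol_zero_iff.mp hq
  have g₁ := htr.green (c1 p) (c1 q)
  have g₂ := htr.green (c2 p) (c2 q)
  rw [hp₁, hq₁] at g₁
  rw [hp₂, hq₂] at g₂
  simp only [c1_swapL, c2_swapL, inner_add_left, inner_sub_left, inner_neg_left,
    inner_smul_left, inner_add_right, inner_sub_right, inner_neg_right, inner_smul_right]
    at g₁ g₂
  rw [inner_sq_eq, c1_emb2, c2_emb2, Om, c1_Top, c1_Top, c2_Top, c2_Top]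
  linear_combination g₂ - g₁

lemma inner_emb2_comp_sub_eq_Om {tr : Hp →L[ℂ] Sq 𝔥} (htr : IsTrace C tr)
    (hU : IsSAExt C dU) (hV : IsSAExt C dV) {dU₂ dV₂ : Submodule ℂ Hp}
    {R₁ R₂ R₁c : Sq H →L[ℂ] Sq Hp} (hR₁ : IsResS C dU dV 0 ζ R₁)
    (hR₂ : IsResS C dU₂ dV₂ 0 ζ R₂) (hR₁c : IsResS C dU dV 0 (conj ζ) R₁c) (x y : Sq H) :
    ⟪(C.emb2.comp R₁ - C.emb2.comp R₂) x, y⟫ =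
      Om (Top tr (R₂ x)) (Top tr (R₁c (swapL H y))) := by
  have hq := hR₁c.1 (swapL H y)
  rw [sub_apply, inner_sub_left, ContinuousLinearMap.comp_apply,
    ContinuousLinearMap.comp_apply, htr.inner_emb2_eq (hR₁.1 x) hq,
    htr.inner_emb2_eq (hR₂.1 x) hq,
    htr.Om_eq_zero hU hV (hR₁.1 x).1 (hR₁.1 x).2.1 hq.1 hq.2.1]
  ring

end Resolvent

end Operators

theorem statement1_general
    {H 𝔥 Hp : Type*}
    [NormedAddCommGroup H] [InnerProductSpace ℂ H] [CompleteSpace H]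
    [NormedAddCommGroup 𝔥] [InnerProductSpace ℂ 𝔥] [FiniteDimensional ℂ 𝔥]
    [NormedAddCommGroup Hp] [InnerProductSpace ℂ Hp]
    (C : Core H 𝔥 Hp) (tr : Hp →L[ℂ] Sq 𝔥) (htr : IsTrace C tr)
    (dU₁ dV₁ dU₂ dV₂ : Submodule ℂ Hp)
    (hU₁ : IsSAExt C dU₁) (hV₁ : IsSAExt C dV₁)
    (hU₂ : IsSAExt C dU₂) (hV₂ : IsSAExt C dV₂)
    (P₁ Q₁ P₂ Q₂ : Sq 𝔥 →L[ℂ] Sq 𝔥)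
    (hP₁ : IsOrthProj P₁) (hQ₁ : IsOrthProj Q₁)
    (hP₂ : IsOrthProj P₂) (hQ₂ : IsOrthProj Q₂)
    (htrU₁ : tr '' (dU₁ : Set Hp) = Set.range P₁)
    (htrV₁ : tr '' (dV₁ : Set Hp) = Set.range Q₁)
    (htrU₂ : tr '' (dU₂ : Set Hp) = Set.range P₂)
    (htrV₂ : tr '' (dV₂ : Set Hp) = Set.range Q₂)
    (ζ : ℂ) (R₁ R₂ : Sq H →L[ℂ] Sq Hp)
    (hR₁ : IsResS C dU₁ dV₁ 0 ζ R₁) (hR₂ : IsResS C dU₂ dV₂ 0 ζ R₂) :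
    (∃ R₂c, IsResS C dU₂ dV₂ 0 ((starRingEnd ℂ) ζ) R₂c) ∧
    ∃ R₁c, IsResS C dU₁ dV₁ 0 ((starRingEnd ℂ) ζ) R₁c ∧
      C.emb2.comp R₁ - C.emb2.comp R₂ =
        ((swapL H).comp (ContinuousLinearMap.adjoint ((Top tr).comp R₁c))).comp
          ((calJ 𝔥).comp ((Top tr).comp R₂)) ∧
      C.emb2.comp R₁ - C.emb2.comp R₂ =
        ((swapL H).comp (ContinuousLinearMap.adjoint ((Top tr).comp R₁c))).comp
          ((pm (P₁.comp ((Jm 𝔥).comp P₂)) (-(Q₁.comp ((Jm 𝔥).comp Q₂)))).comp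
            ((Top tr).comp R₂)) := by
  obtain ⟨R₂c, hR₂c⟩ := hR₂.exists_isResS_conj hU₂ hV₂
  obtain ⟨R₁c, hR₁c⟩ := hR₁.exists_isResS_conj hU₁ hV₁
  refine ⟨⟨R₂c, hR₂c⟩, R₁c, hR₁c, ?_, ?_⟩ <;> ext x : 1 <;>
    refine ext_inner_right ℂ fun y => ?_ <;>
    rw [inner_emb2_comp_sub_eq_Om htr hU₁ hV₁ hR₁ hR₂ hR₁c, inner_swapL_adjoint_comp_apply]
  · exact (inner_calJ_left _ _).symm
  · obtain ⟨hp₁, hp₂, -⟩ := hR₂.1 x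
    obtain ⟨hq₁, hq₂, -⟩ := hR₁c.1 (swapL H y)
    exact (inner_pm_proj_Jm_left hP₁ hQ₁ hP₂ hQ₂ (htrU₂ ▸ Set.mem_image_of_mem tr hp₁)
      (htrV₂ ▸ Set.mem_image_of_mem tr hp₂) (htrU₁ ▸ Set.mem_image_of_mem tr hq₁)
      (htrV₁ ▸ Set.mem_image_of_mem tr hq₂)).symm

/-- Theorem 2.3: symplectic resolvent difference formulas for two
canonically symplectic extensions `𝒩₁, 𝒩₂` of `N`. -/
theorem statement1
    {H 𝔥 Hp : Type*}
    [NormedAddCommGroup H] [InnerProductSpace ℂ H] [CompleteSpace H]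
    [NormedAddCommGroup 𝔥] [InnerProductSpace ℂ 𝔥] [FiniteDimensional ℂ 𝔥]
    [NormedAddCommGroup Hp] [InnerProductSpace ℂ Hp] [CompleteSpace Hp]
    (C : Core H 𝔥 Hp) (tr : Hp →L[ℂ] Sq 𝔥) (htr : IsTrace C tr)
    (dU₁ dV₁ dU₂ dV₂ : Submodule ℂ Hp)
    (hU₁ : IsSAExt C dU₁) (hV₁ : IsSAExt C dV₁)
    (hU₂ : IsSAExt C dU₂) (hV₂ : IsSAExt C dV₂)
    (P₁ Q₁ P₂ Q₂ : Sq 𝔥 →L[ℂ] Sq 𝔥)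
    (hP₁ : IsOrthProj P₁) (hQ₁ : IsOrthProj Q₁)
    (hP₂ : IsOrthProj P₂) (hQ₂ : IsOrthProj Q₂)
    (htrU₁ : tr '' (dU₁ : Set Hp) = Set.range P₁)
    (htrV₁ : tr '' (dV₁ : Set Hp) = Set.range Q₁)
    (htrU₂ : tr '' (dU₂ : Set Hp) = Set.range P₂)
    (htrV₂ : tr '' (dV₂ : Set Hp) = Set.range Q₂)
    (ζ : ℂ) (R₁ R₂ : Sq H →L[ℂ] Sq Hp)
    (hR₁ : IsResS C dU₁ dV₁ 0 ζ R₁) (hR₂ : IsResS C dU₂ dV₂ 0 ζ R₂) :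
    (∃ R₂c, IsResS C dU₂ dV₂ 0 ((starRingEnd ℂ) ζ) R₂c) ∧
    ∃ R₁c, IsResS C dU₁ dV₁ 0 ((starRingEnd ℂ) ζ) R₁c ∧
      C.emb2.comp R₁ - C.emb2.comp R₂ =
        ((swapL H).comp (ContinuousLinearMap.adjoint ((Top tr).comp R₁c))).comp
          ((calJ 𝔥).comp ((Top tr).comp R₂)) ∧
      C.emb2.comp R₁ - C.emb2.comp R₂ =
        ((swapL H).comp (ContinuousLinearMap.adjoint ((Top tr).comp R₁c))).comp
          ((pm (P₁.comp ((Jm 𝔥).comp P₂)) (-(Q₁.comp ((Jm 𝔥).comp Q₂)))).comp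
            ((Top tr).comp R₂)) :=
  statement1_general C tr htr dU₁ dV₁ dU₂ dV₂ hU₁ hV₁ hU₂ hV₂ P₁ Q₁ P₂ Q₂ hP₁ hQ₁ hP₂ hQ₂ htrU₁
    htrV₁ htrU₂ htrV₂ ζ R₁ R₂ hR₁ hR₂

end CSO
end
end

section
/- Fix λ₀ ∈ ℝ, and let λ ↦ w_λ ∈ H₊² be a family defined for λ near λ₀, differentiable at λ₀ in the graph norm of N*, such that (N* + V* − λ)τ w_λ = 0 for each λ. Then Ω(T w_{λ₀}, T ẇ_{λ₀}) = −⟨τ w_{λ₀}, w_{λ₀}⟩_{H²}, where ẇ_{λ₀} denotes the derivative of w_λ at λ₀. -/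
noncomputable section

open Function Set

namespace CSO

local notation "⟪" x ", " y "⟫" => (inner ℂ x y : ℂ)

variable {H 𝔥 Hp : Type*}
  [NormedAddCommGroup H] [InnerProductSpace ℂ H]
  [NormedAddCommGroup 𝔥] [InnerProductSpace ℂ 𝔥]
  [NormedAddCommGroup Hp] [InnerProductSpace ℂ Hp]

end CSO

/-!
Green's identity for `tr`, doubled, reads
`Ω(T p, T q) = ⟨(N* + V*) τ p, q⟩ - ⟨p, (N* + V*) τ q⟩`, because the bounded part
`V* τ = diag(F, -G)` is symmetric. Differentiating `(N* + V*) τ w_λ = λ τ w_λ` at `λ₀` gives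
`(N* + V*) τ ẇ = λ₀ τ ẇ + τ w_{λ₀}`. Substituting both equations, the `λ₀`-terms cancel since
`τ` is symmetric, and `-⟨τ w_{λ₀}, w_{λ₀}⟩` is what remains.
-/

namespace CSO

local notation "⟪" x ", " y "⟫" => (inner ℂ x y : ℂ)

open Topology

section Components

variable {E E' F F' : Type*}
  [NormedAddCommGroup E] [InnerProductSpace ℂ E]
  [NormedAddCommGroup E'] [InnerProductSpace ℂ E']
  [NormedAddCommGroup F] [InnerProductSpace ℂ F]
  [NormedAddCommGroup F'] [InnerProductSpace ℂ F']

@[simp] lemma fst_pm (A : E →L[ℂ] E') (B : F →L[ℂ] F') (u : WithLp 2 (E × F)) :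
    (pm A B u).fst = A u.fst := rfl

@[simp] lemma snd_pm (A : E →L[ℂ] E') (B : F →L[ℂ] F') (u : WithLp 2 (E × F)) :
    (pm A B u).snd = B u.snd := rfl

@[simp] lemma fst_mk2L (A B : E →L[ℂ] F) (x : E) : (mk2L A B x).fst = A x := rfl

@[simp] lemma snd_mk2L (A B : E →L[ℂ] F) (x : E) : (mk2L A B x).snd = B x := rfl

@[simp] lemma c1L_apply (u : Sq E) : c1L u = u.fst := rfl

@[simp] lemma c2L_apply (u : Sq E) : c2L u = u.snd := rfl

lemma isSymmetric_swapL : (swapL E : Sq E →ₗ[ℂ] Sq E).IsSymmetric := fun u v => by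
  simp [swapL, WithLp.prod_inner_apply, add_comm]

lemma Om_Top (tr : E →L[ℂ] Sq F) (p q : Sq E) :
    Om (Top tr p) (Top tr q) = om (tr p.fst) (tr q.fst) - om (tr p.snd) (tr q.snd) :=
  rfl

lemma inner_smul_sub_inner_smul_add_eq {τ : E →L[ℂ] E} (hτ : (τ : E →ₗ[ℂ] E).IsSymmetric)
    (μ : ℝ) (x y : E) :
    ⟪(μ : ℂ) • τ x, y⟫ - ⟪x, (μ : ℂ) • τ y + τ x⟫ = -⟪τ x, x⟫ := by
  have hxy := hτ x y
  have hxx := hτ x x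
  simp only [ContinuousLinearMap.coe_coe] at hxy hxx
  rw [inner_smul_left, inner_add_right, inner_smul_right, hxy, hxx, Complex.conj_ofReal]
  ring

end Components

lemma _root_.HasDerivAt.map_eq_smul_add_of_eventuallyEq {E F : Type*}
    [NormedAddCommGroup E] [NormedSpace ℂ E] [NormedAddCommGroup F] [NormedSpace ℂ F]
    {L B : E →L[ℂ] F} {w : ℝ → E} {wd : E} {t₀ : ℝ} (hw : HasDerivAt w wd t₀)
    (h : (fun t => L (w t)) =ᶠ[𝓝 t₀] fun t => (t : ℂ) • B (w t)) :
    L wd = (t₀ : ℂ) • B wd + B (w t₀) := by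
  have hL : HasDerivAt (fun t => L (w t)) (L wd) t₀ :=
    (L.restrictScalars ℝ).hasFDerivAt.comp_hasDerivAt t₀ hw
  have hB : HasDerivAt (fun t => B (w t)) (B wd) t₀ :=
    (B.restrictScalars ℝ).hasFDerivAt.comp_hasDerivAt t₀ hw
  have htB : HasDerivAt (fun t : ℝ => (t : ℂ) • B (w t)) ((t₀ : ℂ) • B wd + B (w t₀)) t₀ :=
    ((hasDerivAt_id t₀).ofReal_comp.smul hB).congr_deriv (by simp)
  exact (hL.congr_of_eventuallyEq h.symm).unique htB

section Boundary

variable {H 𝔥 Hp : Type*}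
  [NormedAddCommGroup H] [InnerProductSpace ℂ H]
  [NormedAddCommGroup 𝔥] [InnerProductSpace ℂ 𝔥]
  [NormedAddCommGroup Hp] [InnerProductSpace ℂ Hp]

lemma isSymmetric_VopStar_comp_swapL [CompleteSpace H] {F G : H →L[ℂ] H}
    (hF : IsSelfAdjoint F) (hG : IsSelfAdjoint G) :
    ((VopStar F G).comp (swapL H) : Sq H →ₗ[ℂ] Sq H).IsSymmetric := fun u v => by
  have hFs := hF.isSymmetric u.fst v.fst
  have hGs := hG.isSymmetric u.snd v.snd
  simp only [ContinuousLinearMap.coe_coe] at hFs hGs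
  simp [VopStar, swapL, WithLp.prod_inner_apply, hFs, hGs]

lemma Core.emb2_swapL (C : Core H 𝔥 Hp) (p : Sq Hp) :
    C.emb2 (swapL Hp p) = swapL H (C.emb2 p) := rfl

lemma IsTrace.Om_Top_eq {C : Core H 𝔥 Hp} {tr : Hp →L[ℂ] Sq 𝔥} (htr : IsTrace C tr)
    (p q : Sq Hp) :
    Om (Top tr p) (Top tr q) =
      ⟪C.NstarOp (swapL Hp p), C.emb2 q⟫ - ⟪C.emb2 p, C.NstarOp (swapL Hp q)⟫ := by
  rw [Om_Top, ← htr.green, ← htr.green]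
  simp only [Core.NstarOp, Core.Nmax, ContinuousLinearMap.neg_comp, swapL, neg_apply,
    Core.emb2, inner_neg_left, WithLp.prod_inner_apply, WithLp.ofLp_fst, fst_mk2L,
    ContinuousLinearMap.comp_apply, c2L_apply, snd_mk2L, c1L_apply, fst_pm, WithLp.ofLp_snd,
    snd_pm, neg_add_rev, neg_neg, inner_neg_right]
  ring

/-- The operator `(N* + V*) τ`. -/
def Core.NVstarSwap [CompleteSpace H] (C : Core H 𝔥 Hp) (F G : H →L[ℂ] H) :
    Sq Hp →L[ℂ] Sq H :=
  (C.NstarOp + (VopStar F G).comp C.emb2).comp (swapL Hp)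

lemma IsTrace.Om_Top_eq_NVstarSwap [CompleteSpace H] {C : Core H 𝔥 Hp}
    {tr : Hp →L[ℂ] Sq 𝔥} (htr : IsTrace C tr) {F G : H →L[ℂ] H} (hF : IsSelfAdjoint F)
    (hG : IsSelfAdjoint G) (p q : Sq Hp) :
    Om (Top tr p) (Top tr q) =
      ⟪C.NVstarSwap F G p, C.emb2 q⟫ - ⟪C.emb2 p, C.NVstarSwap F G q⟫ := by
  have hV := isSymmetric_VopStar_comp_swapL hF hG (C.emb2 p) (C.emb2 q)
  simp only [ContinuousLinearMap.coe_coe, ContinuousLinearMap.comp_apply] at hV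
  simp only [htr.Om_Top_eq, Core.NVstarSwap, ContinuousLinearMap.comp_apply,
    add_apply, Core.emb2_swapL, inner_add_left, inner_add_right, hV]
  ring

end Boundary

theorem statement12_general
    {H 𝔥 Hp : Type*}
    [NormedAddCommGroup H] [InnerProductSpace ℂ H] [CompleteSpace H]
    [NormedAddCommGroup 𝔥] [InnerProductSpace ℂ 𝔥]
    [NormedAddCommGroup Hp] [InnerProductSpace ℂ Hp]
    (C : Core H 𝔥 Hp) (tr : Hp →L[ℂ] Sq 𝔥) (htr : IsTrace C tr)
    (F G : H →L[ℂ] H) (hF : IsSelfAdjoint F) (hG : IsSelfAdjoint G)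
    (lam₀ : ℝ) (w : ℝ → Sq Hp) (wd : Sq Hp)
    (hderiv : HasDerivAt w wd lam₀)
    (heq : ∃ δ > 0, ∀ lam : ℝ, |lam - lam₀| < δ →
      C.NstarOp (swapL Hp (w lam)) + VopStar F G (C.emb2 (swapL Hp (w lam)))
        - (lam : ℂ) • C.emb2 (swapL Hp (w lam)) = 0) :
    Om (Top tr (w lam₀)) (Top tr wd) =
      -(inner ℂ (swapL H (C.emb2 (w lam₀))) (C.emb2 (w lam₀)) : ℂ) := by
  obtain ⟨δ, hδ, hker⟩ := heq
  have hev : (fun lam => C.NVstarSwap F G (w lam)) =ᶠ[𝓝 lam₀]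
      fun lam => (lam : ℂ) • ((swapL H).comp C.emb2) (w lam) := by
    filter_upwards [Metric.ball_mem_nhds lam₀ hδ] with lam hlam
    rw [Metric.mem_ball, Real.dist_eq] at hlam
    exact sub_eq_zero.mp (hker lam hlam)
  rw [htr.Om_Top_eq_NVstarSwap hF hG, hev.eq_of_nhds,
    hderiv.map_eq_smul_add_of_eventuallyEq hev]
  exact inner_smul_sub_inner_smul_add_eq isSymmetric_swapL lam₀ _ _

/-- the `λ`-crossing form computation in Lemma 4.10: for a
differentiable family `λ ↦ w_λ ∈ ker((N* + V* - λ)τ)`, one has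
`Ω(T w_{λ₀}, T ẇ_{λ₀}) = -⟨τ w_{λ₀}, w_{λ₀}⟩`. -/
theorem statement12
    {H 𝔥 Hp : Type*}
    [NormedAddCommGroup H] [InnerProductSpace ℂ H] [CompleteSpace H]
    [NormedAddCommGroup 𝔥] [InnerProductSpace ℂ 𝔥] [FiniteDimensional ℂ 𝔥]
    [NormedAddCommGroup Hp] [InnerProductSpace ℂ Hp] [CompleteSpace Hp]
    (C : Core H 𝔥 Hp) (tr : Hp →L[ℂ] Sq 𝔥) (htr : IsTrace C tr)
    (F G : H →L[ℂ] H) (hF : IsSelfAdjoint F) (hG : IsSelfAdjoint G)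
    (lam₀ : ℝ) (w : ℝ → Sq Hp) (wd : Sq Hp)
    (hderiv : HasDerivAt w wd lam₀)
    (heq : ∃ δ > 0, ∀ lam : ℝ, |lam - lam₀| < δ →
      C.NstarOp (swapL Hp (w lam)) + VopStar F G (C.emb2 (swapL Hp (w lam)))
        - (lam : ℂ) • C.emb2 (swapL Hp (w lam)) = 0) :
    Om (Top tr (w lam₀)) (Top tr wd) =
      -(inner ℂ (swapL H (C.emb2 (w lam₀))) (C.emb2 (w lam₀)) : ℂ) :=
  statement12_general C tr htr F G hF hG lam₀ w wd hderiv heq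

end CSO
end
end
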